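/- Let G=(Σ,R,T) be a prefix-free context-free game, E a set of effect triples, and σ a terminating one-pass strategy with E(σ) ⊆ E. Then there is a strategy ρ for the online word problem OnlineNFA(N_E) such that W_G(σ) = W_{N_E}(ρ). -/
import Mathlib


namespace CFG

/-- Juliet's two kinds of moves. -/
inductive JMove : Type
  | call : JMove
  | read : JMove
deriving DecidableEq

/-- The extended alphabet Σ̂: `Sum.inl a` is the plain symbol `a`,
`Sum.inr a` is the "called" copy `â`. -/
abbrev HSym (A : Type) : Type := A ⊕ A

/-- The homomorphism ♮ deleting called symbols. -/
def flat {A : Type} (α : List (HSym A)) : List A :=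
  α.filterMap (fun x => match x with | Sum.inl a => some a | Sum.inr _ => none)

/-- A context-free game: a (minimal) DFA `T` over `A` with finite state set `Q`,
and a replacement relation `R` with nonempty replacement words and regular
replacement languages. -/
structure CFGame (A : Type) where
  Q : Type
  fintypeQ : Fintype Q
  T : DFA A Q
  minimal_reachable : ∀ q : Q, ∃ w : List A, T.evalFrom T.start w = q
  minimal_distinguishable :
    ∀ q q' : Q, (∀ w : List A, T.evalFrom q w ∈ T.accept ↔ T.evalFrom q' w ∈ T.accept) → q = q'
  R : A → List A → Prop
  R_ne : ∀ a v, R a v → v ≠ []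
  R_regular : ∀ a, Language.IsRegular {v : List A | R a v}

variable {A : Type}

/-- `a` is a function symbol (its replacement language is nonempty). -/
def CFGame.Fn (G : CFGame A) (a : A) : Prop := ∃ v, G.R a v

/-- One-pass strategies of Juliet (values at non-function symbols are irrelevant). -/
abbrev JStrat (A : Type) : Type := List (HSym A) → A → JMove

/-- Strategies of Romeo (values at non-function symbols are irrelevant). -/
abbrev RStrat (A : Type) : Type := List (HSym A) → A → List A

/-- Validity of a Romeo strategy: replacement words belong to the replacement language. -/
def CFGame.RValid (G : CFGame A) (τ : RStrat A) : Prop :=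
  ∀ (α : List (HSym A)) (a : A), G.Fn a → G.R a (τ α a)

/-- Configurations, instrumented for depth bookkeeping: a history string, the
remaining string where every symbol is annotated with its call-nesting level,
and the maximal nesting depth of the `Call` moves played so far. -/
abbrev Config (A : Type) : Type := List (HSym A) × List (A × ℕ) × ℕ

/-- One step of a play: Juliet reads or calls the current symbol according to `σ`
(a call is only possible at a function symbol); a call is answered by `τ`. -/
noncomputable def CFGame.step (G : CFGame A) (σ : JStrat A) (τ : RStrat A) :
    Config A → Config A :=
  fun c =>
    match c with
    | (α, [], d) => (α, [], d)
    | (α, (a, k) :: v, d) =>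
      letI := Classical.propDecidable (G.Fn a ∧ σ α a = JMove.call)
      if G.Fn a ∧ σ α a = JMove.call then
        (α ++ [Sum.inr a], (τ α a).map (fun b => (b, k + 1)) ++ v, max d (k + 1))
      else (α ++ [Sum.inl a], v, d)

/-- The play of `σ` against `τ` on input word `w`, as the sequence of its
configurations (the configuration stays fixed once the remaining string is empty). -/
noncomputable def CFGame.play (G : CFGame A) (σ : JStrat A) (τ : RStrat A)
    (w : List A) (n : ℕ) : Config A :=
  (G.step σ τ)^[n] ([], w.map (fun a => (a, 0)), 0)

/-- `σ` wins on `w`: against every (valid) Romeo strategy, the play on `w` is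
finite and its final string belongs to the target language. -/
def CFGame.WinsOn (G : CFGame A) (σ : JStrat A) (w : List A) : Prop :=
  ∀ τ : RStrat A, G.RValid τ →
    ∃ n : ℕ, (G.play σ τ w n).2.1 = [] ∧
      G.T.evalFrom G.T.start (flat (G.play σ τ w n).1) ∈ G.T.accept

/-- The winning set `W(σ)`. -/
def CFGame.W (G : CFGame A) (σ : JStrat A) : Set (List A) := {w | G.WinsOn σ w}

/-- `σ` is terminating: every play of `σ` is finite. -/
def CFGame.Terminating (G : CFGame A) (σ : JStrat A) : Prop :=
  ∀ τ : RStrat A, G.RValid τ → ∀ w : List A, ∃ n : ℕ, (G.play σ τ w n).2.1 = []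

/-- `σ` is dominant: it dominates every one-pass strategy. -/
def CFGame.Dominant (G : CFGame A) (σ : JStrat A) : Prop :=
  ∀ σ' : JStrat A, G.W σ' ⊆ G.W σ

/-- `σ` is undominated: no one-pass strategy strictly dominates it. -/
def CFGame.Undominated (G : CFGame A) (σ : JStrat A) : Prop :=
  ¬ ∃ σ' : JStrat A, G.W σ ⊂ G.W σ'

/-- `σ` is forgetful: its decisions only depend on `♮α` and the current symbol. -/
def CFGame.Forgetful (G : CFGame A) (σ : JStrat A) : Prop :=
  ∀ (α β : List (HSym A)) (a : A), G.Fn a → flat α = flat β → σ α a = σ β a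

/-- `σ` is regular: the language `{αa : σ(α,a) = Call}` over Σ̂ is regular. -/
def CFGame.RegularStrat (G : CFGame A) (σ : JStrat A) : Prop :=
  Language.IsRegular
    {x : List (HSym A) | ∃ (α : List (HSym A)) (a : A),
      G.Fn a ∧ σ α a = JMove.call ∧ x = α ++ [Sum.inl a]}

/-- One step of a strategy automaton of a strongly regular strategy, on the state
set `Q ∪ {Call}` (`none` is the absorbing state `Call`). -/
def optStep {Q : Type} (δA : Q → A → Option Q) (o : Option Q) (a : A) : Option Q :=
  o.bind (fun q => δA q a)

/-- `σ` is strongly regular: given by an automaton obtained from `T` by rerouting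
some transitions to a new accepting state `Call`; Juliet plays `Call` on `(α,a)`
iff the automaton maps `♮α·a` to `Call`. -/
def CFGame.StronglyRegular (G : CFGame A) (σ : JStrat A) : Prop :=
  ∃ δA : G.Q → A → Option G.Q,
    (∀ q a, δA q a = some (G.T.step q a) ∨ δA q a = none) ∧
    ∀ (α : List (HSym A)) (a : A), G.Fn a →
      (σ α a = JMove.call ↔
        List.foldl (optStep δA) (some G.T.start) (flat α ++ [a]) = none)

/-- Shortlex (strict) order on words. -/
def shortLex [LinearOrder A] (v w : List A) : Prop :=
  v.length < w.length ∨ (v.length = w.length ∧ List.Lex (· < ·) v w)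

/-- `V <_sl W` for sets of words: the shortlex-least word of the symmetric
difference belongs to `W`. -/
def slLT [LinearOrder A] (V W : Set (List A)) : Prop :=
  ∃ w : List A, w ∈ W ∧ w ∉ V ∧ ∀ v : List A, shortLex v w → (v ∈ V ↔ v ∈ W)

/-- `V ≤_sl W` for sets of words. -/
def slLE [LinearOrder A] (V W : Set (List A)) : Prop := V = W ∨ slLT V W

/-- `σ` is weakly dominant: `W(σ') ≤_sl W(σ)` for every one-pass strategy `σ'`. -/
def CFGame.WeaklyDominant [LinearOrder A] (G : CFGame A) (σ : JStrat A) : Prop :=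
  ∀ σ' : JStrat A, slLE (G.W σ') (G.W σ)

/-- The bounded depth property. -/
def CFGame.BoundedDepthProperty (G : CFGame A) : Prop :=
  ∃ B : ℕ → ℕ, ∀ σ : JStrat A, ∀ k : ℕ, ∃ σk : JStrat A,
    ∀ w ∈ G.W σ, w.length ≤ k →
      G.WinsOn σk w ∧
      ∀ τ : RStrat A, G.RValid τ → ∀ n : ℕ, (G.play σk τ w n).2.2 ≤ B w.length

/-- Prefix-freeness of all replacement languages. -/
def CFGame.PrefixFree (G : CFGame A) : Prop :=
  ∀ (a : A) (u v : List A), G.R a u → G.R a v → u <+: v → u = v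

/-- Non-recursiveness: no function symbol can be derived from itself. -/
def CFGame.NonRecursive (G : CFGame A) : Prop :=
  ¬ ∃ (n : ℕ) (f : ℕ → A), 1 ≤ n ∧ f 0 = f n ∧ (∀ i ≤ n, G.Fn (f i)) ∧
    ∀ k < n, ∃ v : List A, G.R (f k) v ∧ f (k + 1) ∈ v

/-- `σ` is almost undominated: only finitely many words are lost by `σ` but won
by some strategy dominating `σ`. -/
def CFGame.AlmostUndominated (G : CFGame A) (σ : JStrat A) : Prop :=
  Set.Finite {w : List A | ¬ G.WinsOn σ w ∧
    ∃ σ' : JStrat A, G.W σ ⊆ G.W σ' ∧ G.WinsOn σ' w}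

/-- Convergence of a sequence of one-pass strategies. -/
def Converges (G : CFGame A) (σs : ℕ → JStrat A) (σ : JStrat A) : Prop :=
  ∀ n : ℕ, ∃ k0 : ℕ, ∀ k ≥ k0, ∀ α : List (HSym A), α.length ≤ n →
    ∀ a : A, G.Fn a → σ α a = σs k α a

/-- The one-pass strategy defined by a DFA `M` over Σ̂ (a strategy automaton):
play `Call` on `(α,a)` iff `M` accepts `α·a`. -/
noncomputable def autoStrat {S : Type} (M : DFA (HSym A) S) : JStrat A :=
  fun α a =>
    letI := Classical.propDecidable (M.eval (α ++ [Sum.inl a]) ∈ M.accept)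
    if M.eval (α ++ [Sum.inl a]) ∈ M.accept then JMove.call else JMove.read

/-- `States(q; w, σ)`: the `T`-states `δ*(q, ♮α)` over final history strings `α`
of plays of `σ` on `w`. -/
def CFGame.StatesOf (G : CFGame A) (σ : JStrat A) (q : G.Q) (w : List A) : Set G.Q :=
  {q' | ∃ τ : RStrat A, G.RValid τ ∧ ∃ n : ℕ,
    (G.play σ τ w n).2.1 = [] ∧ G.T.evalFrom q (flat (G.play σ τ w n).1) = q'}

/-- `(p, a, S)` is an effect triple of `σ`. -/
def CFGame.IsEffectTriple (G : CFGame A) (σ : JStrat A) (t : G.Q × A × Set G.Q) : Prop :=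
  G.StatesOf σ t.1 [t.2.1] ⊆ t.2.2

/-- An effect triple is trivial if `δ(p,a) ∈ S`. -/
def CFGame.TrivialTriple (G : CFGame A) (t : G.Q × A × Set G.Q) : Prop :=
  G.T.step t.1 t.2.1 ∈ t.2.2

/-- The substrategy `σ^α`. -/
def subStrat (σ : JStrat A) (α : List (HSym A)) : JStrat A :=
  fun β a => σ (α ++ β) a

/-- The effect set `E(σ)`: all effect triples of all substrategies of `σ`. -/
def CFGame.EffectSet (G : CFGame A) (σ : JStrat A) : Set (G.Q × A × Set G.Q) :=
  {t | ∃ α : List (HSym A), G.IsEffectTriple (subStrat σ α) t}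

/-- The transition relation of the NFA `N_E` associated with a set `E` of effect
triples (state set `P(Q)`, initial state `{s}`, accepting states the subsets of `F`). -/
def CFGame.NEStep (G : CFGame A) (E : Set (G.Q × A × Set G.Q))
    (S : Set G.Q) (a : A) (S' : Set G.Q) : Prop :=
  ∀ p ∈ S, ∃ S'' : Set G.Q, S'' ⊆ S' ∧ (p, a, S'') ∈ E

/-- A strategy for the online word problem `OnlineNFA(N_E)`. -/
def CFGame.NEOnlineStrat (G : CFGame A) (E : Set (G.Q × A × Set G.Q))
    (ρ : List A → Set G.Q) : Prop :=
  ρ [] = {G.T.start} ∧ ∀ (w : List A) (a : A), G.NEStep E (ρ w) a (ρ (w ++ [a]))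

/-- The winning set of a strategy for `OnlineNFA(N_E)`. -/
def CFGame.NEWins (G : CFGame A) (ρ : List A → Set G.Q) : Set (List A) :=
  {w | ρ w ⊆ G.T.accept}

/-- A strategy automaton `M` is `(p,a,St)`-inducing. -/
def CFGame.Inducing (G : CFGame A) {S : Type} (M : DFA (HSym A) S)
    (p : G.Q) (a : A) (St : Set G.Q) : Prop :=
  G.Terminating (autoStrat M) ∧ G.Fn a ∧
  (∀ u : List A, G.R a u → G.StatesOf (autoStrat M) p u ⊆ St) ∧
  ∃ QA : G.Q → Set S,
    (∀ q ∈ St, ∀ q' ∈ St, q ≠ q' → Disjoint (QA q) (QA q')) ∧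
    ∀ u : List A, G.R a u → ∀ τ : RStrat A, G.RValid τ → ∀ n : ℕ,
      (G.play (autoStrat M) τ u n).2.1 = [] →
      ((∀ q ∈ St,
          (M.eval (G.play (autoStrat M) τ u n).1 ∈ QA q ↔
            G.T.evalFrom p (flat (G.play (autoStrat M) τ u n).1) = q)) ∧
        ∀ β : List (HSym A), β <+: (G.play (autoStrat M) τ u n).1 →
          β ≠ (G.play (autoStrat M) τ u n).1 → ∀ r ∈ St, M.eval β ∉ QA r)


section Proof9

variable {A : Type}

private lemma play_succ' (G : CFGame A) (σ : JStrat A) (τ : RStrat A) (w : List A) (n : ℕ) :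
    G.play σ τ w (n+1) = G.step σ τ (G.play σ τ w n) := by
  simp [CFGame.play, Function.iterate_succ_apply']

private lemma step_of_nil (G : CFGame A) (σ : JStrat A) (τ : RStrat A) (c : Config A)
    (h : c.2.1 = []) : G.step σ τ c = c := by
  obtain ⟨α, v, d⟩ := c
  simp only at h
  subst h
  rfl

private lemma step_cons_call (G : CFGame A) (σ : JStrat A) (τ : RStrat A)
    (α : List (HSym A)) (a : A) (k : ℕ) (v : List (A × ℕ)) (d : ℕ)
    (h : G.Fn a ∧ σ α a = JMove.call) :
    G.step σ τ (α, (a,k)::v, d) =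
      (α ++ [Sum.inr a], (τ α a).map (fun b => (b, k + 1)) ++ v, max d (k + 1)) := by
  simp only [CFGame.step]
  rw [if_pos h]

private lemma step_cons_read (G : CFGame A) (σ : JStrat A) (τ : RStrat A)
    (α : List (HSym A)) (a : A) (k : ℕ) (v : List (A × ℕ)) (d : ℕ)
    (h : ¬ (G.Fn a ∧ σ α a = JMove.call)) :
    G.step σ τ (α, (a,k)::v, d) = (α ++ [Sum.inl a], v, d) := by
  simp only [CFGame.step]
  rw [if_neg h]

private lemma play_const (G : CFGame A) (σ : JStrat A) (τ : RStrat A) (w : List A) {n : ℕ}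
    (h : (G.play σ τ w n).2.1 = []) : ∀ m, n ≤ m → G.play σ τ w m = G.play σ τ w n := by
  intro m hm
  induction m with
  | zero =>
    have : n = 0 := Nat.le_zero.mp hm
    rw [this]
  | succ k ih =>
    rcases Nat.lt_or_ge n (k+1) with hlt | hge
    · have hk : n ≤ k := Nat.lt_succ_iff.mp hlt
      rw [play_succ', ih hk, step_of_nil G σ τ _ h]
    · have : n = k + 1 := le_antisymm hm hge
      rw [this]

private lemma hist_prefix (G : CFGame A) (σ : JStrat A) (τ : RStrat A) (w : List A) :
    ∀ n m, n ≤ m → (G.play σ τ w n).1 <+: (G.play σ τ w m).1 := by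
  intro n m hm
  induction m with
  | zero => simp_all
  | succ k ih =>
    rcases Nat.lt_or_ge n (k+1) with hlt | hge
    · have hk : n ≤ k := Nat.lt_succ_iff.mp hlt
      refine (ih hk).trans ?_
      rw [play_succ']
      rcases hc : G.play σ τ w k with ⟨α, v, d⟩
      rcases v with _ | ⟨⟨a, j⟩, v⟩
      · rw [step_of_nil G σ τ _ (by simp)]
      · by_cases hcond : G.Fn a ∧ σ α a = JMove.call
        · rw [step_cons_call G σ τ _ _ _ _ _ hcond]; exact ⟨[Sum.inr a], rfl⟩
        · rw [step_cons_read G σ τ _ _ _ _ _ hcond]; exact ⟨[Sum.inl a], rfl⟩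
    · have : n = k + 1 := le_antisymm hm hge
      rw [this]

private lemma hist_len_succ (G : CFGame A) (σ : JStrat A) (τ : RStrat A) (w : List A) (n : ℕ)
    (h : (G.play σ τ w n).2.1 ≠ []) :
    (G.play σ τ w (n+1)).1.length = (G.play σ τ w n).1.length + 1 := by
  rw [play_succ']
  rcases hc : G.play σ τ w n with ⟨α, v, d⟩
  rcases v with _ | ⟨⟨a, j⟩, v⟩
  · simp_all
  · by_cases hcond : G.Fn a ∧ σ α a = JMove.call
    · rw [step_cons_call G σ τ _ _ _ _ _ hcond]; simp
    · rw [step_cons_read G σ τ _ _ _ _ _ hcond]; simp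

private lemma play_nil_word (G : CFGame A) (σ : JStrat A) (τ : RStrat A) :
    ∀ n, G.play σ τ [] n = ([], [], 0) := by
  intro n
  induction n with
  | zero => simp [CFGame.play]
  | succ k ih => rw [play_succ', ih, step_of_nil] ; rfl

/-- a canonical valid Romeo strategy -/
private noncomputable def tau0 (G : CFGame A) : RStrat A := fun _ a =>
  letI := Classical.propDecidable (G.Fn a)
  if h : G.Fn a then h.choose else []

private lemma tau0_valid (G : CFGame A) : G.RValid (tau0 G) := by
  intro α a h
  simp only [tau0]
  rw [dif_pos h]
  exact h.choose_spec

private lemma statesOf_nil (G : CFGame A) (σ : JStrat A) (q : G.Q) :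
    G.StatesOf σ q [] = {q} := by
  ext q'
  constructor
  · rintro ⟨τ, hτ, n, hemp, heval⟩
    rw [play_nil_word] at heval
    simpa [flat] using heval.symm
  · rintro rfl
    exact ⟨tau0 G, tau0_valid G, 0, by simp [CFGame.play], by simp [CFGame.play, flat]⟩

private lemma flat_append (α β : List (HSym A)) : flat (α ++ β) = flat α ++ flat β := by
  simp [flat]

private lemma winsOn_iff (G : CFGame A) (σ : JStrat A) (hterm : G.Terminating σ) (w : List A) :
    G.WinsOn σ w ↔ G.StatesOf σ G.T.start w ⊆ G.T.accept := by
  constructor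
  · intro hw q' ⟨τ, hτ, n, hemp, heval⟩
    obtain ⟨n', hemp', hacc'⟩ := hw τ hτ
    have h1 := play_const G σ τ w hemp (max n n') (le_max_left _ _)
    have h2 := play_const G σ τ w hemp' (max n n') (le_max_right _ _)
    rw [h2] at h1
    rw [h1] at hemp' hacc'
    rw [heval] at hacc'
    exact hacc'
  · intro hsub τ hτ
    obtain ⟨n, hemp⟩ := hterm τ hτ w
    exact ⟨n, hemp, hsub ⟨τ, hτ, n, hemp, rfl⟩⟩

private lemma lockstep1 (G : CFGame A) (σ : JStrat A) {τ1 τ : RStrat A} {w : List A} (a' : A)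
    {n1 : ℕ}
    (hmin : ∀ k < n1, (G.play σ τ1 w k).2.1 ≠ [])
    (hagree : ∀ γ b, γ <+: (G.play σ τ1 w n1).1 → γ ≠ (G.play σ τ1 w n1).1 → τ γ b = τ1 γ b) :
    ∀ n ≤ n1, G.play σ τ (w ++ [a']) n =
      ((G.play σ τ1 w n).1, (G.play σ τ1 w n).2.1 ++ [(a', 0)], (G.play σ τ1 w n).2.2) := by
  intro n hn
  induction n with
  | zero => simp [CFGame.play]
  | succ k ih =>
    have hk : k < n1 := hn
    have ihk := ih (le_of_lt hk)
    have hne := hmin k hk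
    -- the history at step k is a proper prefix of the history at step n1
    have hpre : (G.play σ τ1 w k).1 <+: (G.play σ τ1 w n1).1 :=
      hist_prefix G σ τ1 w k n1 (le_of_lt hk)
    have hlen : (G.play σ τ1 w k).1.length < (G.play σ τ1 w n1).1.length := by
      have h1 := hist_len_succ G σ τ1 w k hne
      have h2 := (hist_prefix G σ τ1 w (k+1) n1 hn).length_le
      omega
    have hneq : (G.play σ τ1 w k).1 ≠ (G.play σ τ1 w n1).1 := by
      intro h; rw [h] at hlen; omega
    rcases hc : G.play σ τ1 w k with ⟨α, v, d⟩
    rcases v with _ | ⟨⟨b, j⟩, v⟩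
    · exact absurd (by simp [hc]) hne
    rw [hc] at ihk hpre hneq
    simp only at ihk hpre hneq
    have htagree : τ α b = τ1 α b := hagree α b hpre hneq
    rw [play_succ', play_succ', ihk, hc, List.cons_append]
    by_cases hcond : G.Fn b ∧ σ α b = JMove.call
    · rw [step_cons_call G σ τ _ _ _ _ _ hcond, step_cons_call G σ τ1 _ _ _ _ _ hcond, htagree]
      simp
    · rw [step_cons_read G σ τ _ _ _ _ _ hcond, step_cons_read G σ τ1 _ _ _ _ _ hcond]

private lemma lockstep2 (G : CFGame A) (σ : JStrat A) {τ τ2 : RStrat A} {w : List A} (a' : A)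
    {n1 : ℕ} {α : List (HSym A)} {d1 : ℕ}
    (hbase : G.play σ τ (w ++ [a']) n1 = (α, [(a', 0)], d1))
    (hτ : ∀ β b, τ (α ++ β) b = τ2 β b) :
    ∀ m, G.play σ τ (w ++ [a']) (n1 + m) =
      (α ++ (G.play (subStrat σ α) τ2 [a'] m).1,
       (G.play (subStrat σ α) τ2 [a'] m).2.1,
       max d1 (G.play (subStrat σ α) τ2 [a'] m).2.2) := by
  intro m
  induction m with
  | zero => simpa [CFGame.play] using hbase
  | succ k ih =>
    have h1 : n1 + (k+1) = (n1 + k) + 1 := rfl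
    rw [h1, play_succ', ih, play_succ']
    rcases hc : G.play (subStrat σ α) τ2 [a'] k with ⟨β, u, e⟩
    rcases u with _ | ⟨⟨b, j⟩, u⟩
    · rw [step_of_nil G _ τ _ (by simp), step_of_nil G _ τ2 _ (by simp)]
    · by_cases hcond : G.Fn b ∧ σ (α ++ β) b = JMove.call
      · have hcond' : G.Fn b ∧ subStrat σ α β b = JMove.call := hcond
        rw [step_cons_call G σ τ _ _ _ _ _ hcond,
            step_cons_call G (subStrat σ α) τ2 _ _ _ _ _ hcond', hτ]
        simp only [subStrat]
        refine Prod.ext ?_ (Prod.ext rfl ?_)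
        · simp [List.append_assoc]
        · simp only
          omega
      · have hcond' : ¬ (G.Fn b ∧ subStrat σ α β b = JMove.call) := hcond
        rw [step_cons_read G σ τ _ _ _ _ _ hcond,
            step_cons_read G (subStrat σ α) τ2 _ _ _ _ _ hcond']
        simp [List.append_assoc]

end Proof9


theorem statement9 {A : Type} [Fintype A] (G : CFGame A) (hpf : G.PrefixFree)
    (E : Set (G.Q × A × Set G.Q)) (σ : JStrat A)
    (hterm : G.Terminating σ) (hE : G.EffectSet σ ⊆ E) :
    ∃ ρ : List A → Set G.Q, G.NEOnlineStrat E ρ ∧ G.W σ = G.NEWins ρ := by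
  classical
  refine ⟨fun w => G.StatesOf σ G.T.start w, ⟨statesOf_nil G σ _, ?_⟩, ?_⟩
  · intro w a p hp
    obtain ⟨τ1, hτ1, n, hemp, heval⟩ := hp
    have hex : ∃ k, (G.play σ τ1 w k).2.1 = [] := ⟨n, hemp⟩
    set n1 := Nat.find hex with hn1
    have h1 : (G.play σ τ1 w n1).2.1 = [] := Nat.find_spec hex
    have hmin : ∀ k < n1, (G.play σ τ1 w k).2.1 ≠ [] := fun k hk => Nat.find_min hex hk
    have hle : n1 ≤ n := Nat.find_min' hex hemp
    have hconst : G.play σ τ1 w n = G.play σ τ1 w n1 := play_const G σ τ1 w h1 n hle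
    set α := (G.play σ τ1 w n1).1 with hα
    have hp' : G.T.evalFrom G.T.start (flat α) = p := by
      rw [hconst] at heval; exact heval
    refine ⟨G.StatesOf (subStrat σ α) p [a], ?_, hE ⟨α, Set.Subset.rfl⟩⟩
    intro q hq
    obtain ⟨τ2, hτ2, m, hm, heval2⟩ := hq
    set τ : RStrat A := fun γ b => if α <+: γ then τ2 (γ.drop α.length) b else τ1 γ b with hτdef
    have hτvalid : G.RValid τ := by
      intro γ b hb
      simp only [hτdef]
      split
      · exact hτ2 _ b hb
      · exact hτ1 γ b hb
    have hagree : ∀ γ b, γ <+: α → γ ≠ α → τ γ b = τ1 γ b := by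
      intro γ b hpre hne
      simp only [hτdef]
      rw [if_neg]
      intro hc
      exact hne (hpre.eq_of_length_le hc.length_le)
    have hbase : G.play σ τ (w ++ [a]) n1 = (α, [(a, 0)], (G.play σ τ1 w n1).2.2) := by
      rw [lockstep1 G σ a hmin hagree n1 le_rfl, h1]
      rfl
    have hτeq : ∀ β b, τ (α ++ β) b = τ2 β b := by
      intro β b
      simp only [hτdef]
      rw [if_pos (List.prefix_append α β), List.drop_left]
    have hfin := lockstep2 G σ a hbase hτeq m
    refine ⟨τ, hτvalid, n1 + m, ?_, ?_⟩
    · rw [hfin]; exact hm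
    · rw [hfin]
      simp only
      rw [flat_append, DFA.evalFrom_of_append, hp', heval2]
  · ext w
    simp only [CFGame.W, CFGame.NEWins, Set.mem_setOf_eq]
    exact winsOn_iff G σ hterm w

end CFG
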